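/- arXiv:1401.7782 — 2 statements merged into one kernel-verified Lean document; each statement's English description precedes it below -/
import Mathlib

section
/- Let F be a field, let v₁,…,vₘ be finitely many pairwise independent (inequivalent) discrete valuations on F, and let n ≥ 1 be an integer invertible in each residue field κ(vᵢ). Denote by Fᵢ the henselization of F at vᵢ. Then the natural map F*/F*ⁿ → ⊕ᵢ Fᵢ*/Fᵢ*ⁿ is surjective. -/
/-- The value group of a normalized discrete valuation. -/
abbrev ZM0 : Type := WithZero (Multiplicative ℤ)

/-- `(H, w, ι)` is a henselization of the discretely valued field `(F, v)`:
`ι : F → H` is a valued field extension, the valuation ring of `w` is henselian,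
and `(H, w)` is initial among henselian valued field extensions of `(F, v)`. -/
structure IsHenselization (F : Type) [Field F] (v : Valuation F ZM0)
    (H : Type) [Field H] (w : Valuation H ZM0) (ι : F →+* H) : Prop where
  comap_eq : w.comap ι = v
  henselian : HenselianLocalRing w.valuationSubring
  universal : ∀ (L : Type) [Field L] (u : Valuation L ZM0) (f : F →+* L),
    u.comap f = v → HenselianLocalRing u.valuationSubring →
      ∃ g : H →+* L, g.comp ι = f ∧ u.comap g = w

/-! Approximate each `aᵢ` by some `xᵢ ∈ F`, which is possible because `F` is dense in its
completion and the henselization embeds into the completion; then approximate all `xᵢ` at once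
by a single `b ∈ F` (weak approximation). Now `ιᵢ b / aᵢ ≡ 1` modulo the maximal ideal of the
henselian valuation ring of `Fᵢ`, where `n` is a unit, so Hensel's lemma makes it an `n`-th
power. -/

open WithZero

namespace Valuation

variable {K : Type*} [Field K]

noncomputable def toAbsoluteValue (v : Valuation K ℤᵐ⁰) : AbsoluteValue K ℝ where
  toFun x := WithZeroMulInt.toNNReal two_ne_zero (v x)
  map_mul' _ _ := by simp
  nonneg' _ := NNReal.zero_le_coe
  eq_zero' _ := by simp
  add_le' x y := by
    have hmono := (WithZeroMulInt.toNNReal_strictMono one_lt_two).monotone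
    have h := hmono (v.map_add x y)
    rw [hmono.map_max] at h
    exact_mod_cast h.trans (max_le_add_of_nonneg zero_le zero_le)

theorem toAbsoluteValue_lt_iff (v : Valuation K ℤᵐ⁰) {x y : K} :
    v.toAbsoluteValue x < v.toAbsoluteValue y ↔ v x < v y :=
  NNReal.coe_lt_coe.trans (WithZeroMulInt.toNNReal_strictMono one_lt_two).lt_iff_lt

theorem toAbsoluteValue_le_iff (v : Valuation K ℤᵐ⁰) {x y : K} :
    v.toAbsoluteValue x ≤ v.toAbsoluteValue y ↔ v x ≤ v y := by
  simp only [← not_lt, toAbsoluteValue_lt_iff]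

theorem isEquiv_toAbsoluteValue_iff {v w : Valuation K ℤᵐ⁰} :
    v.toAbsoluteValue.IsEquiv w.toAbsoluteValue ↔ v.IsEquiv w := by
  simp only [AbsoluteValue.IsEquiv, Valuation.IsEquiv, toAbsoluteValue_le_iff]

theorem isNontrivial_toAbsoluteValue (v : Valuation K ℤᵐ⁰) [hv : v.IsNontrivial] :
    v.toAbsoluteValue.IsNontrivial := by
  obtain ⟨x, hx0, hx1⟩ := hv.exists_val_nontrivial
  refine ⟨x, v.ne_zero_iff.mp hx0, fun h => hx1 (le_antisymm ?_ ?_)⟩ <;>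
  · rw [← map_one v, ← toAbsoluteValue_le_iff, map_one, h]

theorem exists_forall_map_sub_lt_of_pairwise_not_isEquiv {ι : Type*} [Finite ι]
    {v : ι → Valuation K ℤᵐ⁰} (hv : ∀ i, (v i).IsNontrivial)
    (hne : Pairwise fun i j => ¬ (v i).IsEquiv (v j)) (x : ι → K) (hx : ∀ i, x i ≠ 0) :
    ∃ b : K, ∀ i, v i (b - x i) < v i (x i) := by
  let y i := WithAbs.toAbs (v i).toAbsoluteValue (x i)
  let U : Set (∀ i, WithAbs (v i).toAbsoluteValue) := {z | ∀ i, ‖z i - y i‖ < ‖y i‖}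
  have hU : IsOpen U := by
    simp only [U, Set.ofPred_forall]
    exact isOpen_iInter_of_finite fun i => isOpen_lt (by fun_prop) continuous_const
  have hyU : y ∈ U := fun i => by simpa [y, WithAbs.norm_toAbs_eq] using hx i
  obtain ⟨b, hb⟩ := (AbsoluteValue.denseRange_algebraMap_pi
    (fun i => (v i).isNontrivial_toAbsoluteValue)
    (fun i j hij => isEquiv_toAbsoluteValue_iff.not.mpr (hne hij))).exists_mem_open hU ⟨y, hyU⟩
  exact ⟨b, fun i => (toAbsoluteValue_lt_iff _).mp (hb i)⟩

theorem mem_maximalIdeal_pow_iff {v : Valuation K ℤᵐ⁰} {π : K} (hπ : v π = exp (-1)) (k : ℕ)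
    (x : v.valuationSubring) :
    x ∈ IsLocalRing.maximalIdeal v.valuationSubring ^ k ↔ v x ≤ v (π ^ k) := by
  have hO := valuationSubring.integers v
  let ϖ : v.valuationSubring := ⟨π, by rw [mem_valuationSubring_iff, hπ]; decide⟩
  have hmax : IsLocalRing.maximalIdeal v.valuationSubring = Ideal.span {ϖ} := by
    ext y
    rw [Ideal.mem_span_singleton, ← hO.le_iff_dvd, IsLocalRing.mem_maximalIdeal,
      mem_nonunits_iff, hO.isUnit_iff_valuation_eq_one]
    change ¬ v y = 1 ↔ v y ≤ v π
    have hy : v y ≤ 1 := y.2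
    rw [hπ, ← ne_eq, ← hy.lt_iff_ne]
    simpa using lt_mul_exp_iff_le (x := v y) (y := exp (-1)) exp_ne_zero
  rw [hmax, Ideal.span_singleton_pow, Ideal.mem_span_singleton, ← hO.le_iff_dvd]
  rfl

end Valuation

namespace Valued

variable {L : Type*} [Field L] [Valued L ℤᵐ⁰]

instance : IsTopologicalRing (v : Valuation L ℤᵐ⁰).valuationSubring :=
  inferInstanceAs (IsTopologicalRing (v : Valuation L ℤᵐ⁰).valuationSubring.toSubring)

instance : IsUniformAddGroup (v : Valuation L ℤᵐ⁰).valuationSubring :=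
  inferInstanceAs
    (IsUniformAddGroup (v : Valuation L ℤᵐ⁰).valuationSubring.toSubring.toAddSubgroup)

theorem isAdic_maximalIdeal {π : L} (hπ : v π = exp (-1)) :
    IsAdic (IsLocalRing.maximalIdeal (v : Valuation L ℤᵐ⁰).valuationSubring) := by
  set O := (v : Valuation L ℤᵐ⁰).valuationSubring
  have hpow (k : ℕ) : ((IsLocalRing.maximalIdeal O ^ k : Ideal O) : Set O) =
      Subtype.val ⁻¹' {y : L | v.restrict y ≤ v.restrict (π ^ k)} := by
    ext x
    simp only [SetLike.mem_coe, Set.mem_preimage, Set.mem_ofPred_eq, Valuation.restrict_le_iff]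
    exact Valuation.mem_maximalIdeal_pow_iff hπ k x
  have hπ0 : π ≠ 0 := v.ne_zero_iff.mp (hπ ▸ exp_ne_zero)
  refine isAdic_iff.mpr ⟨fun k => ?_, fun s hs => ?_⟩
  · rw [hpow]
    exact (isOpen_closedBall L (by simp [hπ0])).preimage continuous_subtype_val
  · obtain ⟨u, hu, hus⟩ := (mem_nhds_subtype _ _ _).mp hs
    obtain ⟨γ, hγ⟩ := mem_nhds_zero.mp hu
    obtain ⟨k, hk⟩ := exists_pow_lt₀ (hπ ▸ exp_lt_exp.mpr (by norm_num) : v π < exp 0)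
      (Units.map MonoidWithZeroHom.ValueGroup₀.embedding.toMonoidHom γ)
    refine ⟨k, hpow k ▸ fun x hx => hus (hγ ?_)⟩
    rw [Set.mem_ofPred_eq, Valuation.restrict_lt_iff_lt_embedding]
    exact ((Valuation.restrict_le_iff _).mp hx).trans_lt (by simpa using hk)

theorem henselianLocalRing_valuationSubring [CompleteSpace L] {π : L} (hπ : v π = exp (-1)) :
    HenselianLocalRing (v : Valuation L ℤᵐ⁰).valuationSubring := by
  set O := (v : Valuation L ℤᵐ⁰).valuationSubring
  have : IsAdicComplete (IsLocalRing.maximalIdeal O) O :=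
    (isAdic_maximalIdeal hπ).isAdicComplete_iff.mpr
      ⟨(isClosed_valuationSubring L).completeSpace_coe, inferInstance⟩
  exact ⟨fun f hf a₀ h₁ h₂ => HenselianRing.is_henselian f hf a₀ h₁ (h₂.map _)⟩

end Valued

theorem IsHenselization.exists_map_sub_lt {F H : Type} [Field F] [Field H]
    {v : Valuation F ℤᵐ⁰} {w : Valuation H ℤᵐ⁰} {ι : F →+* H} (hh : IsHenselization F v H w ι)
    (hv : Function.Surjective v) {a : H} (ha : a ≠ 0) : ∃ x : F, w (ι x - a) < w a := by
  let : Valued F ℤᵐ⁰ := Valued.mk' v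
  let L := UniformSpace.Completion F
  obtain ⟨π, hπ⟩ := hv (exp (-1))
  have hcomap : Valued.v.comap (UniformSpace.Completion.coeRingHom : F →+* L) = v :=
    Valuation.ext Valued.valuedCompletion_apply
  obtain ⟨g, hgι, hgw⟩ := hh.universal L Valued.v _ hcomap
    (Valued.henselianLocalRing_valuationSubring ((Valued.valuedCompletion_apply π).trans hπ))
  have hg (y : H) : Valued.v (g y) = w y := by rw [← hgw]; rfl
  have hU : IsOpen {y : L | Valued.v (y - g a) < Valued.v (g a)} := by
    have := (Valued.isOpen_ball L (Valued.v.restrict (g a))).preimage (continuous_sub_right (g a))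
    simp only [Valuation.restrict_lt_iff] at this
    exact this
  obtain ⟨x, hx⟩ := UniformSpace.Completion.denseRange_coe.exists_mem_open hU
    ⟨g a, show Valued.v (g a - g a) < _ by simpa [hg, zero_lt_iff] using ha⟩
  refine ⟨x, ?_⟩
  rw [← hg, ← hg, map_sub, ← RingHom.comp_apply, hgι]
  exact hx

theorem IsHenselization.exists_forall_map_sub_lt {F : Type} [Field F] {I : Type*} [Finite I]
    {v : I → Valuation F ℤᵐ⁰} (hv : ∀ i, Function.Surjective (v i))
    (hne : Pairwise fun i j => ¬ (v i).IsEquiv (v j)) {H : I → Type} [∀ i, Field (H i)]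
    {w : ∀ i, Valuation (H i) ℤᵐ⁰} {φ : ∀ i, F →+* H i}
    (hh : ∀ i, IsHenselization F (v i) (H i) (w i) (φ i)) {a : ∀ i, H i} (ha : ∀ i, a i ≠ 0) :
    ∃ b : Fˣ, ∀ i, w i (φ i b - a i) < w i (a i) := by
  have hvw (i) (t : F) : w i (φ i t) = v i t := by rw [← (hh i).comap_eq]; rfl
  choose x hx using fun i => (hh i).exists_map_sub_lt (hv i) (ha i)
  have hvx (i) : v i (x i) = w i (a i) := by rw [← hvw, (w i).map_eq_of_sub_lt (hx i)]
  have hnt (i) : (v i).IsNontrivial := by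
    obtain ⟨y, hy⟩ := hv i (exp 1)
    exact ⟨y, by simp [hy]⟩
  obtain ⟨b, hb⟩ := Valuation.exists_forall_map_sub_lt_of_pairwise_not_isEquiv hnt hne x
    fun i => (v i).ne_zero_iff.mp (by simpa [hvx] using ha i)
  have hba (i) : w i (φ i b - a i) < w i (a i) := by
    rw [show φ i b - a i = φ i (b - x i) + (φ i (x i) - a i) by rw [map_sub]; ring]
    exact (w i).map_add_lt (by rw [hvw, ← hvx]; exact hb i) (hx i)
  rcases isEmpty_or_nonempty I with hI | ⟨⟨i⟩⟩
  · exact ⟨1, isEmptyElim⟩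
  refine ⟨Units.mk0 b ?_, hba⟩
  rintro rfl
  simpa using hba i

namespace Valuation

variable {K Γ₀ : Type*} [Field K] [LinearOrderedCommGroupWithZero Γ₀] (u : Valuation K Γ₀)

theorem isUnit_natCast_residueField_iff (n : ℕ) :
    IsUnit (n : IsLocalRing.ResidueField u.valuationSubring) ↔ u n = 1 := by
  rw [← map_natCast (IsLocalRing.residue u.valuationSubring), isUnit_map_iff,
    (valuationSubring.integers u).isUnit_iff_valuation_eq_one, map_natCast]

theorem exists_pow_eq_of_valuation_sub_one_lt_one [HenselianLocalRing u.valuationSubring]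
    {n : ℕ} (hn : u n = 1) {x : K} (hx : u (x - 1) < 1) : ∃ c : Kˣ, (c : K) ^ n = x := by
  have hn0 : n ≠ 0 := by rintro rfl; simp at hn
  have hx1 : u x = 1 := by
    simpa using u.map_eq_of_sub_lt (x := 1) (y := x) (by rwa [map_one])
  have hO := valuationSubring.integers u
  let X : u.valuationSubring := ⟨x, hx1.le⟩
  let f := Polynomial.X ^ n - Polynomial.C X
  have hf : f.eval 1 ∈ IsLocalRing.maximalIdeal u.valuationSubring := by
    rw [IsLocalRing.mem_maximalIdeal, mem_nonunits_iff, hO.isUnit_iff_valuation_eq_one]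
    simpa [f, X, u.map_sub_swap] using hx.ne
  have hf' : IsUnit (f.derivative.eval 1) := by
    simpa [f, Polynomial.derivative_X_pow, hO.isUnit_iff_valuation_eq_one] using hn
  obtain ⟨c, hc, -⟩ :=
    HenselianLocalRing.is_henselian f (Polynomial.monic_X_pow_sub_C X hn0) 1 hf hf'
  have hcx : (c : K) ^ n = x := by simpa [sub_eq_zero, f, X] using congrArg Subtype.val hc
  have hx0 : x ≠ 0 := u.ne_zero_iff.mp (hx1 ▸ one_ne_zero)
  exact ⟨Units.mk0 c (ne_zero_pow hn0 (hcx ▸ hx0)), hcx⟩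

theorem exists_eq_mul_pow_of_valuation_sub_lt [HenselianLocalRing u.valuationSubring]
    {n : ℕ} (hn : u n = 1) {a y : K} (h : u (y - a) < u a) : ∃ c : Kˣ, y = a * c ^ n := by
  have ha : a ≠ 0 := by rintro rfl; simp at h
  obtain ⟨c, hc⟩ := u.exists_pow_eq_of_valuation_sub_one_lt_one hn (x := y / a) (by
    rwa [← div_self ha, ← sub_div, map_div₀, div_lt_one₀ (zero_lt_iff.mpr (u.ne_zero_iff.mpr ha))])
  exact ⟨c, by rw [hc, mul_div_cancel₀ _ ha]⟩

end Valuation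

theorem units_mod_nth_powers_surjective_general (F : Type) [Field F]
    (m : ℕ) (v : Fin m → Valuation F ZM0)
    (hnormalized : ∀ i, Function.Surjective (v i))
    (hindep : ∀ i j, i ≠ j → ¬ (v i).IsEquiv (v j))
    (Fh : Fin m → Type) [∀ i, Field (Fh i)]
    (w : ∀ i, Valuation (Fh i) ZM0) (ι : ∀ i, F →+* Fh i)
    (hhens : ∀ i, IsHenselization F (v i) (Fh i) (w i) (ι i))
    (n : ℕ)
    (hninv : ∀ i, IsUnit (n : IsLocalRing.ResidueField (v i).valuationSubring)) :
    ∀ a : ∀ i, (Fh i)ˣ, ∃ b : Fˣ, ∀ i, ∃ c : (Fh i)ˣ,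
      Units.map (ι i : F →* Fh i) b = a i * c ^ n := by
  intro a
  obtain ⟨b, hb⟩ := IsHenselization.exists_forall_map_sub_lt hnormalized
    (fun i j hij => hindep i j hij) hhens fun i => (a i).ne_zero
  refine ⟨b, fun i => ?_⟩
  have := (hhens i).henselian
  have hn : w i n = 1 := by
    rw [← map_natCast (ι i), ← Valuation.comap_apply, (hhens i).comap_eq,
      ← Valuation.isUnit_natCast_residueField_iff]
    exact hninv i
  obtain ⟨c, hc⟩ := (w i).exists_eq_mul_pow_of_valuation_sub_lt hn (hb i)
  exact ⟨c, Units.ext hc⟩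

/-- Let `F` be a field, `v₁, …, vₘ` finitely many pairwise
inequivalent normalized discrete valuations on `F`, and `n ≥ 1` an integer
invertible in each residue field `κ(vᵢ)`.  Let `Fᵢ` be the henselization of
`F` at `vᵢ`.  Then the natural map `F*/F*ⁿ → ⊕ᵢ Fᵢ*/Fᵢ*ⁿ` is surjective:
for any family `(aᵢ)` of units of the `Fᵢ`, there is `b ∈ F*` mapping to `aᵢ`
modulo `n`-th powers in each `Fᵢ`. -/
theorem units_mod_nth_powers_surjective (F : Type) [Field F]
    (m : ℕ) (v : Fin m → Valuation F ZM0)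
    (hnormalized : ∀ i, Function.Surjective (v i))
    (hindep : ∀ i j, i ≠ j → ¬ (v i).IsEquiv (v j))
    (Fh : Fin m → Type) [∀ i, Field (Fh i)]
    (w : ∀ i, Valuation (Fh i) ZM0) (ι : ∀ i, F →+* Fh i)
    (hhens : ∀ i, IsHenselization F (v i) (Fh i) (w i) (ι i))
    (n : ℕ) (hn : 1 ≤ n)
    (hninv : ∀ i, IsUnit (n : IsLocalRing.ResidueField (v i).valuationSubring)) :
    ∀ a : ∀ i, (Fh i)ˣ, ∃ b : Fˣ, ∀ i, ∃ c : (Fh i)ˣ,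
      Units.map (ι i : F →* Fh i) b = a i * c ^ n :=
  units_mod_nth_powers_surjective_general F m v hnormalized hindep Fh w ι hhens n hninv
end

section
/- Let F be a field of characteristic ≠ 2 and r ≥ 1 an integer. If p(F(t)) ≤ 2ʳ for the rational function field F(t), then for every finite field extension L/F with L nonreal, one has s(L) ≤ 2^{r−1}. -/
/-!
If `F` is real it has characteristic zero, so `L = F(θ)`; writing `-1 = ∑ bᵢ(θ)²` with
`deg bᵢ < deg g`, `g` the minimal polynomial of `θ`, a degree count shows that `g` divides
`f = 1 + ∑ bᵢ²` exactly once. (If `F` itself is nonreal, take `θ = 0` and `g = f = t`.)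
By hypothesis `f` is a sum of `2ʳ` squares in `F(t)`; clearing denominators and cancelling
powers of `g` leaves `∑ Pⱼ² ≡ 0 mod g` with some `Pⱼ ≢ 0 mod g`, a nontrivial zero of `∑ xⱼ²`
over `F[t]/(g) ⊆ L`, so `s(L) ≤ 2ʳ - 1`. Since nonzero sums of `2ᵏ` squares form a group
(Pfister), this forces `s(L) ≤ 2ʳ⁻¹`.
-/

/-- `a` is a sum of `m` squares in `F`. -/
def SumSqRep (F : Type*) [Field F] (m : ℕ) (a : F) : Prop :=
  ∃ f : Fin m → F, a = ∑ i, f i ^ 2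

/-- The level `s(F)` of a field: the least number of squares summing to `-1`
(`⊤` if `F` is formally real). -/
noncomputable def fieldLevel (F : Type*) [Field F] : ℕ∞ :=
  sInf {n : ℕ∞ | ∃ m : ℕ, n = m ∧ SumSqRep F m (-1)}

/-- The Pythagoras number `p(F)`: the least `p` such that every sum of squares
in `F` is a sum of `p` squares. -/
noncomputable def pythagorasNumber (F : Type*) [Field F] : ℕ∞ :=
  sInf {n : ℕ∞ | ∃ m : ℕ, n = m ∧ ∀ a : F, (∃ k, SumSqRep F k a) → SumSqRep F m a}

/-- `F` is nonreal: `-1` is a sum of squares in `F`. -/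
def IsNonreal (F : Type*) [Field F] : Prop := ∃ m, SumSqRep F m (-1)

open Polynomial Matrix

namespace SumSqRep

variable {K : Type*} [Field K] {m n : ℕ} {a b : K}

theorem mono (h : SumSqRep K m a) (hmn : m ≤ n) : SumSqRep K n a := by
  obtain ⟨f, rfl⟩ := h
  obtain ⟨d, rfl⟩ := Nat.exists_eq_add_of_le hmn
  exact ⟨Fin.append f 0, by simp [Fin.sum_univ_add]⟩

theorem map {L : Type*} [Field L] (φ : K →+* L) (h : SumSqRep K n a) : SumSqRep L n (φ a) := by
  obtain ⟨f, rfl⟩ := h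
  exact ⟨φ ∘ f, by simp⟩

theorem mul_sq (h : SumSqRep K n a) (c : K) : SumSqRep K n (a * c ^ 2) := by
  obtain ⟨f, rfl⟩ := h
  exact ⟨fun i => f i * c, by simp [Finset.sum_mul, mul_pow]⟩

theorem sq_add (h : SumSqRep K n a) (c : K) : SumSqRep K (n + 1) (c ^ 2 + a) := by
  obtain ⟨f, rfl⟩ := h
  exact ⟨Fin.cons c f, by simp [Fin.sum_univ_succ]⟩

/-- `x = ((x + 1) / 2) ^ 2 + (-1) * ((x - 1) / 2) ^ 2`. -/
theorem of_neg_one (h2 : (2 : K) ≠ 0) (h : SumSqRep K n (-1)) (x : K) :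
    SumSqRep K (n + 1) x := by
  convert (h.mul_sq ((x - 1) / 2)).sq_add ((x + 1) / 2) using 1
  field_simp
  ring

end SumSqRep

section Similarity

variable {E : Type*} [Field E] {ι κ : Type*} [Fintype ι] [DecidableEq ι] [Fintype κ]
  [DecidableEq κ] {a b : E}

def IsSimilarityFactor (ι : Type*) [Fintype ι] [DecidableEq ι] (a : E) : Prop :=
  ∃ T : Matrix ι ι E, Tᵀ * T = a • 1

namespace IsSimilarityFactor

theorem sq (c : E) : IsSimilarityFactor ι (c ^ 2) :=
  ⟨c • 1, by simp [pow_two, smul_smul]⟩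

theorem exists_mul_transpose (h : IsSimilarityFactor ι a) :
    ∃ T : Matrix ι ι E, Tᵀ * T = a • 1 ∧ T * Tᵀ = a • 1 := by
  obtain ⟨T, hT⟩ := h
  rcases eq_or_ne a 0 with rfl | ha
  · exact ⟨0, by simp⟩
  · have hinv : (a⁻¹ • Tᵀ) * T = 1 := by rw [smul_mul, hT, smul_smul, inv_mul_cancel₀ ha, one_smul]
    refine ⟨T, hT, ?_⟩
    rw [← mul_eq_one_comm.mp hinv, Matrix.mul_smul, smul_smul, mul_inv_cancel₀ ha, one_smul]

theorem add_of_ne_zero {A B : Matrix ι ι E} (ha : a ≠ 0) (hA : Aᵀ * A = a • 1)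
    (hB : Bᵀ * B = b • 1) (hB' : B * Bᵀ = b • 1) :
    IsSimilarityFactor (ι ⊕ ι) (a + b) := by
  -- `C` is forced by the vanishing of the off-diagonal block `Aᵀ * B + Cᵀ * A` of `Mᵀ * M`.
  set C := -a⁻¹ • (A * Bᵀ * A)
  have hC : Cᵀ = -a⁻¹ • (Aᵀ * B * Aᵀ) := by simp [C, Matrix.mul_assoc]
  have hCC : Cᵀ * C = b • 1 := by
    calc Cᵀ * C = (a⁻¹ * a⁻¹) • (Aᵀ * B * (Aᵀ * A) * Bᵀ * A) := by
          simp [C, Matrix.mul_assoc, smul_smul]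
      _ = a⁻¹ • (Aᵀ * (B * Bᵀ) * A) := by
          simp [hA, Matrix.mul_assoc, smul_smul, ha]
      _ = b • 1 := by
          simp [hB', hA, smul_smul, mul_comm b, ha]
  have hCA : Cᵀ * A = -(Aᵀ * B) := by
    rw [hC, smul_mul, Matrix.mul_assoc, hA]; simp [smul_smul, ha]
  have hAC : Aᵀ * C = -(Bᵀ * A) := by
    simp only [C, Matrix.mul_smul, ← Matrix.mul_assoc, hA]; simp [smul_smul, ha]
  refine ⟨fromBlocks A B C A, ?_⟩
  rw [fromBlocks_transpose, fromBlocks_multiply, hCC, hCA, hAC, hA, hB, ← fromBlocks_one,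
    fromBlocks_smul]
  simp [add_smul, add_comm]

theorem add (ha : IsSimilarityFactor ι a) (hb : IsSimilarityFactor ι b) :
    IsSimilarityFactor (ι ⊕ ι) (a + b) := by
  obtain ⟨A, hA, hA'⟩ := ha.exists_mul_transpose
  obtain ⟨B, hB, hB'⟩ := hb.exists_mul_transpose
  by_cases ha0 : a ≠ 0
  · exact add_of_ne_zero ha0 hA hB hB'
  by_cases hb0 : b ≠ 0
  · rw [add_comm]; exact add_of_ne_zero hb0 hB hA hA'
  push Not at ha0 hb0
  simpa [ha0, hb0] using sq (ι := ι ⊕ ι) (0 : E)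

theorem reindex (e : ι ≃ κ) (h : IsSimilarityFactor ι a) : IsSimilarityFactor κ a := by
  obtain ⟨T, hT⟩ := h
  refine ⟨Matrix.reindex e e T, ?_⟩
  simp [hT, Matrix.submatrix_smul]

theorem mul_sum_sq (h : IsSimilarityFactor ι a) (y : ι → E) :
    ∃ z : ι → E, a * ∑ i, y i ^ 2 = ∑ i, z i ^ 2 := by
  obtain ⟨T, hT⟩ := h
  refine ⟨T *ᵥ y, ?_⟩
  have hdot (v : ι → E) : ∑ i, v i ^ 2 = v ⬝ᵥ v := by simp [dotProduct, pow_two]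
  rw [hdot, hdot, dotProduct_mulVec, ← mulVec_transpose, mulVec_mulVec, hT, smul_mulVec,
    one_mulVec, smul_dotProduct, smul_eq_mul]

end IsSimilarityFactor

theorem isSimilarityFactor_sum_sq : ∀ (k : ℕ) (x : Fin (2 ^ k) → E),
    IsSimilarityFactor (Fin (2 ^ k)) (∑ i, x i ^ 2)
  | 0, x => by simpa using IsSimilarityFactor.sq (x 0)
  | k + 1, x => by
    let e : Fin (2 ^ k) ⊕ Fin (2 ^ k) ≃ Fin (2 ^ (k + 1)) :=
      finSumFinEquiv.trans (finCongr (by ring))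
    rw [← e.sum_comp, Fintype.sum_sum_type]
    exact ((isSimilarityFactor_sum_sq k _).add (isSimilarityFactor_sum_sq k _)).reindex e

theorem SumSqRep.mul_of_two_pow {k : ℕ} (ha : SumSqRep E (2 ^ k) a) (hb : SumSqRep E (2 ^ k) b) :
    SumSqRep E (2 ^ k) (a * b) := by
  obtain ⟨x, rfl⟩ := ha
  obtain ⟨y, rfl⟩ := hb
  obtain ⟨z, hz⟩ := (isSimilarityFactor_sum_sq k x).mul_sum_sq y
  exact ⟨z, hz⟩

end Similarity

section Level

variable {K : Type*} [Field K]

theorem SumSqRep.neg_one_of_two_pow_succ_sub_one {k : ℕ}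
    (h : SumSqRep K (2 ^ (k + 1) - 1) (-1)) : SumSqRep K (2 ^ k) (-1) := by
  have hk : 2 ^ (k + 1) - 1 = 2 ^ k + (2 ^ k - 1) := by
    have := Nat.one_le_two_pow (n := k); rw [pow_succ]; omega
  rw [hk] at h
  obtain ⟨x, hx⟩ := h
  rw [Fin.sum_univ_add] at hx
  set a := ∑ i, x (Fin.castAdd _ i) ^ 2
  set b := ∑ i, x (Fin.natAdd _ i) ^ 2
  by_cases ha : a = 0
  · exact SumSqRep.mono ⟨_, by rw [hx, ha, zero_add]⟩ (Nat.sub_le _ _)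
  have hb : SumSqRep K (2 ^ k) (1 + b) := by
    have := SumSqRep.sq_add (⟨_, rfl⟩ : SumSqRep K (2 ^ k - 1) b) 1
    rwa [Nat.sub_add_cancel Nat.one_le_two_pow, one_pow] at this
  -- `-1 = a (1 + b) / a²` since `1 + b = -a`, and `a (1 + b)` is a sum of `2 ^ k` squares.
  convert (SumSqRep.mul_of_two_pow (⟨_, rfl⟩ : SumSqRep K (2 ^ k) a) hb).mul_sq a⁻¹ using 1
  rw [show 1 + b = -a by linear_combination -hx]
  field_simp

theorem sumSqRep_neg_one_of_sum_sq_eq_zero {n : ℕ} (c : Fin n → K) (hc : ∑ i, c i ^ 2 = 0)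
    (j : Fin n) (hj : c j ≠ 0) : SumSqRep K (n - 1) (-1) := by
  cases n with
  | zero => exact j.elim0
  | succ m =>
    rw [Fin.sum_univ_succAbove _ j] at hc
    show SumSqRep K m (-1)
    refine ⟨fun i => c (j.succAbove i) / c j, ?_⟩
    simp only [div_pow, ← Finset.sum_div]
    rw [eq_div_iff (pow_ne_zero 2 hj)]
    linear_combination -hc

theorem fieldLevel_le_of_sumSqRep {n : ℕ} (h : SumSqRep K n (-1)) : fieldLevel K ≤ n :=
  sInf_le ⟨n, rfl, h⟩

theorem sumSqRep_of_pythagorasNumber_le {N : ℕ} (hp : pythagorasNumber K ≤ N) {a : K}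
    (ha : ∃ k, SumSqRep K k a) : SumSqRep K N a := by
  set S := {n : ℕ∞ | ∃ m : ℕ, n = m ∧ ∀ a : K, (∃ k, SumSqRep K k a) → SumSqRep K m a}
  have hp : sInf S ≤ N := hp
  have hS : S.Nonempty := by
    by_contra hS
    rw [Set.not_nonempty_iff_eq_empty.mp hS, sInf_empty] at hp
    exact ENat.top_ne_natCast N (top_le_iff.mp hp).symm
  obtain ⟨m, hm, hmS⟩ := csInf_mem hS
  have hmN : (m : ℕ∞) ≤ N := hm ▸ hp
  exact (hmS a ha).mono (by exact_mod_cast hmN)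

end Level

theorem SumSqRep.exists_mul_sq_eq_sum_sq {R K : Type*} [CommRing R] [IsDomain R] [Field K]
    [Algebra R K] [IsFractionRing R K] {n : ℕ} {f : R}
    (h : SumSqRep K n (algebraMap R K f)) :
    ∃ q : R, q ≠ 0 ∧ ∃ P : Fin n → R, f * q ^ 2 = ∑ j, P j ^ 2 := by
  obtain ⟨x, hx⟩ := h
  obtain ⟨q, hq⟩ := IsLocalization.exist_integer_multiples_of_finite (nonZeroDivisors R) x
  choose P hP using hq
  refine ⟨q, nonZeroDivisors.coe_ne_zero q, P, IsFractionRing.injective R K ?_⟩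
  rw [map_mul, map_pow, hx, Finset.sum_mul]
  simp [hP, Algebra.smul_def, mul_pow, mul_comm]

theorem Prime.exists_dvd_sum_sq_of_mul_sq_eq_sum_sq {R ι : Type*} [CommRing R] [IsDomain R]
    [WfDvdMonoid R] [Fintype ι] {g f : R} (hg : Prime g) (hdvd : g ∣ f) (hsq : ¬ g ^ 2 ∣ f)
    {q : R} (hq : q ≠ 0) {P : ι → R} (hP : f * q ^ 2 = ∑ j, P j ^ 2) :
    ∃ P' : ι → R, g ∣ ∑ j, P' j ^ 2 ∧ ∃ j, ¬ g ∣ P' j := by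
  obtain ⟨k, rfl⟩ := hdvd
  have hk : ¬ g ∣ k := fun ⟨k', hk'⟩ => hsq ⟨k', by rw [hk']; ring⟩
  induction q using IsWellFounded.induction (DvdNotUnit (α := R)) generalizing P with
  | ind q ih =>
  by_cases hall : ∀ j, g ∣ P j
  · choose P' hP' using hall
    -- all `P j` are divisible by `g`, so `g² ∣ g k q²` forces `g ∣ q`: divide everything by `g`.
    have hsum : ∑ j, P j ^ 2 = g ^ 2 * ∑ j, P' j ^ 2 := by
      simp only [hP', mul_pow, Finset.mul_sum]
    have hkq : k * q ^ 2 = g * ∑ j, P' j ^ 2 := by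
      apply mul_left_cancel₀ hg.ne_zero
      linear_combination hP + hsum
    obtain ⟨q', rfl⟩ : g ∣ q :=
      hg.dvd_of_dvd_pow ((hg.dvd_or_dvd ⟨_, hkq⟩).resolve_left hk)
    have hq' : q' ≠ 0 := right_ne_zero_of_mul hq
    refine ih q' ⟨hq', g, hg.not_isUnit, by rw [mul_comm]⟩ hq' (P := P') ?_
    apply mul_left_cancel₀ (pow_ne_zero 2 hg.ne_zero)
    linear_combination hP + hsum
  · push Not at hall
    exact ⟨P, hP ▸ dvd_mul_of_dvd_left (dvd_mul_right g k) _, hall⟩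

section RatFunc

variable {F L : Type*} [Field F] [Field L] [Algebra F L]

theorem sumSqRep_neg_one_of_minpoly_dvd {θ : L} (hθ : IsIntegral F θ) {f : F[X]} {n : ℕ}
    (hf : SumSqRep (RatFunc F) n (algebraMap F[X] (RatFunc F) f)) (hdvd : minpoly F θ ∣ f)
    (hsq : ¬ minpoly F θ ^ 2 ∣ f) : SumSqRep L (n - 1) (-1) := by
  obtain ⟨q, hq, P, hP⟩ := hf.exists_mul_sq_eq_sum_sq
  obtain ⟨P', hP', j, hj⟩ :=
    (minpoly.prime hθ).exists_dvd_sum_sq_of_mul_sq_eq_sum_sq hdvd hsq hq hP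
  refine sumSqRep_neg_one_of_sum_sq_eq_zero (fun i => aeval θ (P' i)) ?_ j
    (mt minpoly.dvd_iff.mpr hj)
  simpa using minpoly.dvd_iff.mp hP'

theorem Polynomial.not_sq_dvd_one_add_sum_sq {R : Type*} [CommRing R] [IsDomain R] {g : R[X]}
    (hg : 0 < g.natDegree) {m : ℕ} {b : Fin m → R[X]} (hb : ∀ i, (b i).natDegree < g.natDegree)
    (h0 : 1 + ∑ i, b i ^ 2 ≠ 0) : ¬ g ^ 2 ∣ 1 + ∑ i, b i ^ 2 := by
  intro hdvd
  have hle := natDegree_le_of_dvd hdvd h0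
  rw [natDegree_pow] at hle
  have : (1 + ∑ i, b i ^ 2).natDegree ≤ 2 * (g.natDegree - 1) := by
    refine (natDegree_add_le _ _).trans (max_le (by simp) ?_)
    refine natDegree_sum_le_of_forall_le _ _ fun i _ => natDegree_pow_le.trans ?_
    have := hb i
    omega
  omega

theorem IsNonreal.of_charP (p : ℕ) [CharP F p] (hp : p ≠ 0) : IsNonreal F :=
  ⟨p - 1, fun _ => 1, by simp [Nat.cast_sub (Nat.one_le_iff_ne_zero.mpr hp)]⟩

theorem charZero_of_not_isNonreal (hF : ¬ IsNonreal F) : CharZero F := by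
  rw [← CharP.ringChar_zero_iff_CharZero]
  by_contra hp
  exact hF (IsNonreal.of_charP (ringChar F) hp)

theorem one_add_sum_sq_ne_zero_of_not_isNonreal (hF : ¬ IsNonreal F) {m : ℕ} (x : Fin m → F) :
    1 + ∑ i, x i ^ 2 ≠ 0 :=
  fun h => hF ⟨m, x, by linear_combination -h⟩

theorem exists_sum_sq_minpoly_dvd_not_sq_dvd_of_not_isNonreal [FiniteDimensional F L]
    (hF : ¬ IsNonreal F) (hL : IsNonreal L) :
    ∃ θ : L, ∃ f : F[X], (∃ m, SumSqRep (RatFunc F) m (algebraMap F[X] (RatFunc F) f)) ∧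
      minpoly F θ ∣ f ∧ ¬ minpoly F θ ^ 2 ∣ f := by
  have := charZero_of_not_isNonreal hF
  let pb := Field.powerBasisOfFiniteOfSeparable F L
  have hdeg : (minpoly F pb.gen).natDegree = pb.dim := pb.natDegree_minpoly
  obtain ⟨m, γ, hγ⟩ := hL
  choose b hb hγb using fun i => pb.exists_eq_aeval (γ i)
  refine ⟨pb.gen, 1 + ∑ i, b i ^ 2, ⟨m + 1, ?_⟩, ?_, ?_⟩
  · simpa using SumSqRep.sq_add ⟨fun i => algebraMap F[X] (RatFunc F) (b i), rfl⟩ 1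
  · exact minpoly.dvd_iff.mpr (by simp [← hγb, ← hγ])
  · refine not_sq_dvd_one_add_sum_sq (hdeg ▸ pb.dim_pos) (fun i => hdeg ▸ hb i) fun h0 => ?_
    exact one_add_sum_sq_ne_zero_of_not_isNonreal hF (fun i => (b i).eval 0)
      (by simpa [eval_finsetSum] using congrArg (eval 0) h0)

theorem IsNonreal.exists_sum_sq_minpoly_dvd_not_sq_dvd [FiniteDimensional F L]
    (h2 : (2 : F) ≠ 0) (hL : IsNonreal L) :
    ∃ θ : L, ∃ f : F[X], (∃ m, SumSqRep (RatFunc F) m (algebraMap F[X] (RatFunc F) f)) ∧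
      minpoly F θ ∣ f ∧ ¬ minpoly F θ ^ 2 ∣ f := by
  by_cases hF : IsNonreal F
  · obtain ⟨m, hm⟩ := hF
    have h2' : (2 : RatFunc F) ≠ 0 := by
      rw [← map_ofNat (algebraMap F (RatFunc F)) 2]
      exact (_root_.map_ne_zero _).mpr h2
    refine ⟨0, X, ⟨m + 1, ?_⟩, ?_⟩
    · exact SumSqRep.of_neg_one h2' (by simpa using hm.map (algebraMap F (RatFunc F))) _
    · rw [minpoly.zero]
      simpa using (pow_dvd_pow_iff X_ne_zero not_isUnit_X : (X : F[X]) ^ 2 ∣ X ^ 1 ↔ 2 ≤ 1)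
  · exact exists_sum_sq_minpoly_dvd_not_sq_dvd_of_not_isNonreal hF hL

end RatFunc

/-- one direction of Pfister's theorem. If `p(F(t)) ≤ 2^r`
then every finite nonreal extension `L/F` has level `s(L) ≤ 2^(r-1)`. -/
theorem level_le_of_pythagoras_ratFunc_le (F : Type*) [Field F]
    (h2 : (2 : F) ≠ 0) (r : ℕ) (hr : 1 ≤ r)
    (hp : pythagorasNumber (RatFunc F) ≤ ((2 ^ r : ℕ) : ℕ∞)) :
    ∀ (L : Type*) [Field L] [Algebra F L] [FiniteDimensional F L],
      IsNonreal L → fieldLevel L ≤ ((2 ^ (r - 1) : ℕ) : ℕ∞) := by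
  intro L _ _ _ hL
  obtain ⟨θ, f, hf, hdvd, hsq⟩ := hL.exists_sum_sq_minpoly_dvd_not_sq_dvd h2
  have hlevel : SumSqRep L (2 ^ r - 1) (-1) :=
    sumSqRep_neg_one_of_minpoly_dvd (.of_finite F θ) (sumSqRep_of_pythagorasNumber_le hp hf)
      hdvd hsq
  obtain ⟨k, rfl⟩ : ∃ k, r = k + 1 := ⟨r - 1, by omega⟩
  exact fieldLevel_le_of_sumSqRep hlevel.neg_one_of_two_pow_succ_sub_one
end
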